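/- arXiv:1706.00270 — 6 statements merged into one kernel-verified Lean document; each statement's English description precedes it below -/
import Mathlib

section
/- There exist an interval Markov chain I and a Markov chain M whose underlying graphs are isomorphic to each other, such that M satisfies I under the at-every-step semantics but M does not satisfy I under the once-and-for-all semantics. Concretely, take I with states s0 (labeled ∅), s1, s2 (both labeled α), transitions P(s0,s1)=[0,0.4], P(s0,s2)=[0.6,1], and P(si,sj)=[0,1] for i,j ∈ {1,2}; and take M with the same states and labels, p(s0)(s1)=p(s0)(s2)=0.5 and p(si)(sj)=0.5 for i,j ∈ {1,2}. Then M ⊨ᵃ I but M ⊭ᵒ I. -/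
open Classical
noncomputable section

structure MC (S : Type) (A : Type) where
  s0 : S
  p : S → S → ℝ
  nonneg : ∀ s s', 0 ≤ p s s'
  sum_one : ∀ s, ∑ᶠ s', p s s' = 1
  V : S → Set A

namespace MC

variable {S A : Type}

/-- Probability of a finite path (product of transition probabilities). -/
def pathProb (p : S → S → ℝ) : S → List S → ℝ
  | _, [] => 1
  | s, s' :: l => p s s' * pathProb p s' l

/-- `UntilPath φ ψ s l` : starting from `s`, the (nonempty) suffix `l` first reaches a
`ψ`-state at its last position, with `φ` holding at all strictly earlier positions after
the start. -/
inductive UntilPath (φ ψ : S → Prop) : S → List S → Prop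
  | single {s s' : S} (h : ψ s') : UntilPath φ ψ s [s']
  | cons {s s' : S} {l : List S} (hψ : ¬ ψ s') (hφ : φ s') (h : UntilPath φ ψ s' l) :
      UntilPath φ ψ s (s' :: l)

/-- `P_s(φ U ψ)` : first-passage sum over until-paths. -/
noncomputable def untilProb (p : S → S → ℝ) (φ ψ : S → Prop) (s : S) : ℝ :=
  ∑' l : {l : List S // UntilPath φ ψ s l}, pathProb p s l.1

/-- `P_s(◊ψ)` : probability of eventually reaching a `ψ`-state from `s`. -/
noncomputable def reachProb (p : S → S → ℝ) (ψ : S → Prop) (s : S) : ℝ :=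
  if ψ s then 1 else untilProb p (fun _ => True) ψ s

/-- `P^M(◊α)` : probability of eventually reaching a state labeled `α` from the initial
state of `M`. -/
noncomputable def Preach (M : MC S A) (α : Set A) : ℝ :=
  reachProb M.p (fun s => M.V s = α) M.s0

/-- Reachability via positive-probability transitions. -/
def Reaches (p : S → S → ℝ) : S → S → Prop :=
  Relation.ReflTransGen fun a b => 0 < p a b

end MC

/-- Interval Markov chain: each transition carries an interval `[Plo, Phi] ⊆ [0,1]`. -/
structure IMC (S : Type) (A : Type) where
  s0 : S
  Plo : S → S → ℝ
  Phi : S → S → ℝ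
  V : S → Set A

/-- Once-and-for-all satisfaction `M ⊨ᵒ I`. -/
def SatO {S A : Type} (M : MC S A) (I : IMC S A) : Prop :=
  M.s0 = I.s0 ∧ M.V = I.V ∧
    ∀ s, MC.Reaches M.p M.s0 s → ∀ s', M.p s s' ∈ Set.Icc (I.Plo s s') (I.Phi s s')

/-- `R` is an at-every-step satisfaction relation between `M` and `I`. -/
def IsSatRel {T S A : Type} (M : MC T A) (I : IMC S A) (R : T → S → Prop) : Prop :=
  R M.s0 I.s0 ∧
    ∀ t s, R t s → M.V t = I.V s ∧
      ∃ δ : T → S → ℝ,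
        (∀ t' s', 0 ≤ δ t' s') ∧
        (∀ t', 0 < M.p t t' → ∑ᶠ s', δ t' s' = 1) ∧
        (∀ s', (∑ᶠ t', M.p t t' * δ t' s') ∈ Set.Icc (I.Plo s s') (I.Phi s s')) ∧
        (∀ t' s', 0 < δ t' s' → R t' s')

/-- At-every-step satisfaction `M ⊨ᵃ I`. -/
def SatA {T S A : Type} (M : MC T A) (I : IMC S A) : Prop :=
  ∃ R, IsSatRel M I R

/-- `M` satisfies `I` with degree `n`. -/
def SatADeg {T S A : Type} (n : ℕ) (M : MC T A) (I : IMC S A) : Prop :=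
  ∃ R, IsSatRel M I R ∧ ∀ t, {s | R t s}.ncard ≤ n

/-- Combined transition function on the disjoint union of two Markov chains. -/
def sumP {S T A : Type} (M : MC S A) (N : MC T A) : S ⊕ T → S ⊕ T → ℝ
  | .inl a, .inl b => M.p a b
  | .inr a, .inr b => N.p a b
  | _, _ => 0

/-- Combined labelling on the disjoint union. -/
def sumV {S T A : Type} (M : MC S A) (N : MC T A) : S ⊕ T → Set A :=
  Sum.elim M.V N.V

/-- Probabilistic bisimilarity of two Markov chains. -/
def Bisimilar {S T A : Type} (M : MC S A) (N : MC T A) : Prop :=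
  ∃ B : (S ⊕ T) → (S ⊕ T) → Prop,
    Equivalence B ∧ B (Sum.inl M.s0) (Sum.inr N.s0) ∧
    ∀ a b, B a b → sumV M N a = sumV M N b ∧
      ∀ C : Set (S ⊕ T), (∀ x y, B x y → (x ∈ C ↔ y ∈ C)) →
        (∑ᶠ c ∈ C, sumP M N a c) = ∑ᶠ c ∈ C, sumP M N b c

/-- Transition function of the concrete Markov chain `M`. -/
def pEx : Fin 3 → Fin 3 → ℝ := fun _ j => if j = 0 then 0 else 1 / 2

/-- Labelling: state `0` is labeled `∅`, states `1` and `2` are labeled `α = univ`. -/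
def VEx : Fin 3 → Set Unit := fun i => if i = 0 then ∅ else Set.univ

/-- Lower interval endpoints of the concrete IMC `I`. -/
def IloEx : Fin 3 → Fin 3 → ℝ := fun i j => if i = 0 ∧ j = 2 then 0.6 else 0

/-- Upper interval endpoints of the concrete IMC `I`. -/
def IhiEx : Fin 3 → Fin 3 → ℝ := fun i j =>
  if j = 0 then 0 else if i = 0 ∧ j = 1 then 0.4 else 1

def MEx : MC (Fin 3) Unit where
  s0 := 0
  p := pEx
  nonneg := by intro s s'; unfold pEx; split <;> norm_num
  sum_one := by
    intro s
    rw [finsum_eq_sum_of_fintype, Fin.sum_univ_three]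
    simp [pEx]
    norm_num
  V := VEx

def IEx : IMC (Fin 3) Unit where
  s0 := 0
  Plo := IloEx
  Phi := IhiEx
  V := VEx

def REx : Fin 3 → Fin 3 → Prop := fun t s => (t = 0 ∧ s = 0) ∨ (t ≠ 0 ∧ s ≠ 0)

def δ0 : Fin 3 → Fin 3 → ℝ := fun t' s' =>
  if t' = 0 then (if s' = 0 then 1 else 0)
  else if t' = 1 then (if s' = 1 then 0.8 else if s' = 2 then 0.2 else 0)
  else (if s' = 2 then 1 else 0)

def δid : Fin 3 → Fin 3 → ℝ := fun t' s' => if s' = t' then 1 else 0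

/-- a concrete IMC `I` and MC `M` with isomorphic underlying graphs such
that `M ⊨ᵃ I` but `M ⊭ᵒ I`. -/
theorem stmt2 :
    ∃ (M : MC (Fin 3) Unit) (I : IMC (Fin 3) Unit),
      M.s0 = 0 ∧ M.p = pEx ∧ M.V = VEx ∧
      I.s0 = 0 ∧ I.Plo = IloEx ∧ I.Phi = IhiEx ∧ I.V = VEx ∧
      SatA M I ∧ ¬ SatO M I := by
  refine ⟨MEx, IEx, rfl, rfl, rfl, rfl, rfl, rfl, rfl, ?_, ?_⟩
  · refine ⟨REx, Or.inl ⟨rfl, rfl⟩, ?_⟩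
    intro t s hts
    rcases hts with ⟨ht, hs⟩ | ⟨ht, hs⟩
    · subst ht; subst hs
      refine ⟨rfl, δ0, ?_, ?_, ?_, ?_⟩
      · intro t' s'; unfold δ0; split_ifs <;> norm_num
      · intro t' _
        rw [finsum_eq_sum_of_fintype, Fin.sum_univ_three]
        fin_cases t' <;> simp [δ0] <;> norm_num
      · intro s'
        rw [finsum_eq_sum_of_fintype, Fin.sum_univ_three]
        fin_cases s' <;>
          simp [MEx, IEx, pEx, δ0, IloEx, IhiEx, Set.mem_Icc] <;> norm_num
      · intro t' s' h
        unfold δ0 at h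
        unfold REx
        fin_cases t' <;> fin_cases s' <;> simp_all <;> norm_num at h ⊢
    · refine ⟨?_, δid, ?_, ?_, ?_, ?_⟩
      · show VEx t = VEx s
        unfold VEx; rw [if_neg ht, if_neg hs]
      · intro t' s'; unfold δid; split <;> norm_num
      · intro t' _
        rw [finsum_eq_sum_of_fintype, Fin.sum_univ_three]
        fin_cases t' <;> simp [δid]
      · intro s'
        rw [finsum_eq_sum_of_fintype, Fin.sum_univ_three]
        fin_cases t <;> fin_cases s <;> simp_all <;>
          fin_cases s' <;>
          simp [MEx, IEx, pEx, δid, IloEx, IhiEx, Set.mem_Icc] <;> norm_num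
      · intro t' s' h
        unfold δid at h
        have : s' = t' := by by_contra hc; rw [if_neg hc] at h; exact lt_irrefl 0 h
        subst this
        unfold REx
        fin_cases s' <;> simp_all
  · rintro ⟨-, -, h⟩
    have := h 0 Relation.ReflTransGen.refl 1
    simp [MEx, IEx, pEx, IloEx, IhiEx, Set.mem_Icc] at this
    norm_num at this
end
end

section
/- Let I be an interval Markov chain and M a Markov chain satisfying I under the at-every-step semantics with satisfaction degree n (i.e., each state of M is related to at most n states of I by the satisfaction relation). Then there exists a Markov chain M' satisfying I with degree 1 such that M and M' are probabilistically bisimilar. Moreover M' can be taken with state space of size at most |M|·|I|, with one state u_t^s for each related pair (t,s), initial state u_{t0}^{s0}, and transition probabilities p'(u_t^s)(u_{t'}^{s'}) = p(t)(t')·δ_t^s(t')(s') where δ_t^s is the correspondence function for the pair (t,s). -/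
open Classical

/-- degree reduction.  If `M ⊨ᵃ I` with degree `n` (relation `R`,
correspondence functions `δ`), then the split chain `M'` on pairs `{(t,s) | R t s}`
with transitions `p'(u_t^s)(u_{t'}^{s'}) = p(t)(t')·δ_t^s(t')(s')` satisfies `I` with
degree 1 and is bisimilar to `M`. -/
theorem stmt3 {T S A : Type} [Finite T] [Finite S]
    (M : MC T A) (I : IMC S A) (n : ℕ)
    (R : T → S → Prop) (hR0 : R M.s0 I.s0)
    (δ : T → S → T → S → ℝ)
    (hlab : ∀ t s, R t s → M.V t = I.V s)
    (hnn : ∀ t s t' s', 0 ≤ δ t s t' s')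
    (hdist : ∀ t s, R t s → ∀ t', 0 < M.p t t' → ∑ᶠ s', δ t s t' s' = 1)
    (hint : ∀ t s, R t s → ∀ s',
      (∑ᶠ t', M.p t t' * δ t s t' s') ∈ Set.Icc (I.Plo s s') (I.Phi s s'))
    (hsupp : ∀ t s, R t s → ∀ t' s', 0 < δ t s t' s' → R t' s')
    (hdeg : ∀ t, {s | R t s}.ncard ≤ n) :
    ∃ M' : MC {x : T × S // R x.1 x.2} A,
      M'.s0 = ⟨(M.s0, I.s0), hR0⟩ ∧
      (∀ u v : {x : T × S // R x.1 x.2},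
        M'.p u v = M.p u.1.1 v.1.1 * δ u.1.1 u.1.2 v.1.1 v.1.2) ∧
      (∀ u : {x : T × S // R x.1 x.2}, M'.V u = M.V u.1.1) ∧
      SatADeg 1 M' I ∧ Bisimilar M M' := by
  
  classical
  haveI : Fintype T := Fintype.ofFinite T
  haveI : Fintype S := Fintype.ofFinite S
  haveI : Fintype {x : T × S // R x.1 x.2} := Fintype.ofFinite _
  -- δ vanishes outside R
  have hδ0 : ∀ t s, R t s → ∀ t' s', ¬ R t' s' → δ t s t' s' = 0 := by
    intro t s hts t' s' h
    by_contra h'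
    exact h (hsupp t s hts t' s' (lt_of_le_of_ne (hnn t s t' s') (Ne.symm h')))
  -- summing over the subtype equals summing over the whole product
  have key : ∀ (g : T × S → ℝ), (∀ x : T × S, ¬ R x.1 x.2 → g x = 0) →
      (∑ v : {x : T × S // R x.1 x.2}, g v.1) = ∑ x : T × S, g x := by
    intro g hg
    rw [← Finset.sum_filter_of_ne (s := Finset.univ) (p := fun x : T × S => R x.1 x.2)
      (f := g) (fun x _ hx => by by_contra h; exact hx (hg x h))]
    exact (Finset.sum_subtype (Finset.univ.filter fun x : T × S => R x.1 x.2)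
      (fun x => by simp) g).symm
  have hrow : ∀ t s, R t s → ∀ t', M.p t t' * (∑ s', δ t s t' s') = M.p t t' := by
    intro t s hts t'
    rcases (lt_or_eq_of_le (M.nonneg t t')) with hp | hp
    · have h := hdist t s hts t' hp
      rw [finsum_eq_sum_of_fintype] at h
      rw [h, mul_one]
    · rw [← hp, zero_mul]
  refine ⟨{ s0 := ⟨(M.s0, I.s0), hR0⟩
            p := fun u v => M.p u.1.1 v.1.1 * δ u.1.1 u.1.2 v.1.1 v.1.2
            nonneg := fun u v => mul_nonneg (M.nonneg _ _) (hnn _ _ _ _)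
            sum_one := ?_
            V := fun u => M.V u.1.1 }, rfl, fun u v => rfl, fun u => rfl, ?_, ?_⟩
  · -- sum_one
    intro u
    rw [finsum_eq_sum_of_fintype,
        key (fun x => M.p u.1.1 x.1 * δ u.1.1 u.1.2 x.1 x.2)
          (fun x hx => by simp [hδ0 _ _ u.2 _ _ hx]),
        Fintype.sum_prod_type]
    have h1 : (∑ t' : T, ∑ s' : S, M.p u.1.1 t' * δ u.1.1 u.1.2 t' s')
        = ∑ t' : T, M.p u.1.1 t' := by
      refine Finset.sum_congr rfl fun t' _ => ?_
      rw [← Finset.mul_sum]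
      exact hrow _ _ u.2 t'
    rw [h1]
    have h2 := M.sum_one u.1.1
    rwa [finsum_eq_sum_of_fintype] at h2
  · -- SatADeg 1
    refine ⟨fun u s' => s' = u.1.2, ⟨rfl, ?_⟩, ?_⟩
    · intro u s hus
      subst hus
      refine ⟨hlab _ _ u.2, fun v s' => if s' = v.1.2 then 1 else 0, ?_, ?_, ?_, ?_⟩
      · intro v s'
        dsimp only
        split <;> norm_num
      · intro v _
        rw [finsum_eq_sum_of_fintype]
        simp
      · intro s''
        rw [finsum_eq_sum_of_fintype]
        have h3 : (∑ v : {x : T × S // R x.1 x.2},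
              M.p u.1.1 v.1.1 * δ u.1.1 u.1.2 v.1.1 v.1.2 * (if s'' = v.1.2 then 1 else 0))
            = ∑ᶠ t', M.p u.1.1 t' * δ u.1.1 u.1.2 t' s'' := by
          rw [key (fun x => M.p u.1.1 x.1 * δ u.1.1 u.1.2 x.1 x.2 * (if s'' = x.2 then 1 else 0))
                (fun x hx => by simp [hδ0 _ _ u.2 _ _ hx]),
              Fintype.sum_prod_type, finsum_eq_sum_of_fintype]
          refine Finset.sum_congr rfl fun t' _ => ?_
          simp only [mul_ite, mul_one, mul_zero, Finset.sum_ite_eq, Finset.mem_univ, if_true]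
        rw [h3]
        exact hint _ _ u.2 s''
      · intro v s' h
        by_contra hne
        simp [hne] at h
    · intro u
      have : {s | s = u.1.2} = {u.1.2} := Set.setOf_eq_eq_singleton
      simp only [this, Set.ncard_singleton, le_refl]
  · -- Bisimilar
    refine ⟨fun a b => Sum.elim id (fun v : {x : T × S // R x.1 x.2} => v.1.1) a
        = Sum.elim id (fun v => v.1.1) b, ⟨fun _ => rfl, Eq.symm, Eq.trans⟩, rfl, ?_⟩
    intro a b hab
    constructor
    · cases a <;> cases b <;> simp_all [sumV]
    · intro C hC
      have hCi : ∀ v : {x : T × S // R x.1 x.2}, (Sum.inr v ∈ C) ↔ (Sum.inl v.1.1 ∈ C) :=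
        fun v => hC _ _ rfl
      have main : ∀ (N : MC {x : T × S // R x.1 x.2} A),
          (∀ u v, N.p u v = M.p u.1.1 v.1.1 * δ u.1.1 u.1.2 v.1.1 v.1.2) →
          ∀ a : T ⊕ {x : T × S // R x.1 x.2}, (∑ᶠ c ∈ C, sumP M N a c)
          = ∑ t' : T, if Sum.inl t' ∈ C
              then M.p (Sum.elim id (fun v : {x : T × S // R x.1 x.2} => v.1.1) a) t' else 0 := by
        intro N hN a
        rw [finsum_mem_def, finsum_eq_sum_of_fintype, Fintype.sum_sum_type]
        cases a with
        | inl t =>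
          have hz : (∑ v : {x : T × S // R x.1 x.2},
              Set.indicator C (sumP M N (Sum.inl t)) (Sum.inr v)) = 0 :=
            Finset.sum_eq_zero fun v _ => by simp [Set.indicator_apply, sumP]
          rw [hz, add_zero]
          refine Finset.sum_congr rfl fun t' _ => ?_
          simp [Set.indicator_apply, sumP]
        | inr u =>
          have hz : (∑ t' : T, Set.indicator C (sumP M N (Sum.inr u)) (Sum.inl t')) = 0 :=
            Finset.sum_eq_zero fun t' _ => by simp [Set.indicator_apply, sumP]
          rw [hz, zero_add]
          have h3 : (∑ v : {x : T × S // R x.1 x.2},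
                Set.indicator C (sumP M N (Sum.inr u)) (Sum.inr v))
              = ∑ v : {x : T × S // R x.1 x.2},
                  (fun x : T × S => if Sum.inl x.1 ∈ C
                    then M.p u.1.1 x.1 * δ u.1.1 u.1.2 x.1 x.2 else 0) v.1 := by
            refine Finset.sum_congr rfl fun v _ => ?_
            dsimp only
            rw [Set.indicator_apply]
            by_cases h : Sum.inr v ∈ C
            · rw [if_pos h, if_pos ((hCi v).1 h)]
              exact hN u v
            · rw [if_neg h, if_neg (fun hh => h ((hCi v).2 hh))]
          rw [h3, key (fun x : T × S => if Sum.inl x.1 ∈ C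
                then M.p u.1.1 x.1 * δ u.1.1 u.1.2 x.1 x.2 else 0)
                (fun x hx => by simp [hδ0 _ _ u.2 _ _ hx]),
              Fintype.sum_prod_type]
          refine Finset.sum_congr rfl fun t' _ => ?_
          by_cases h : Sum.inl t' ∈ C
          · simp only [if_pos h]
            rw [← Finset.mul_sum]
            exact hrow _ _ u.2 t'
          · simp [h]
      rw [main _ (fun u v => rfl) a, main _ (fun u v => rfl) b, hab]
end

section
/- Let I be a finite interval Markov chain, M a Markov chain satisfying I under the at-every-step semantics, and α a state label. Then there exist Markov chains M₁ and M₂, each satisfying I with the same structure as I (i.e., under the once-and-for-all semantics), such that P^{M₁}(◊α) ≤ P^{M}(◊α) ≤ P^{M₂}(◊α). -/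
/-!
Resolve every state `s` of `I` by an `M`-state `σ s` related to it and let `s` move as `σ s`
does, pushed to `S` along the correspondence function `δ (σ s) s`; any such chain satisfies `I`
once and for all. Let `P` be the reachability probability in `M`. If `σ s` minimises `P`, then
`s ↦ P (σ s)` is superharmonic for the new chain, hence bounds its reachability probability (the
least fixed point) from above. If `σ s` maximises `P`, then `s ↦ P (σ s)` is subharmonic, and a
maximum principle for `P ∘ σ - reachProb` bounds it by the reachability probability, provided no
absorbing target-free set keeps `P ∘ σ` positive; breaking ties by shortest hitting distance
excludes such sets.
-/

open Classical

lemma eq_of_le_sum_mul {ι : Type*} [Fintype ι] {w f : ι → ℝ} {m : ℝ} (hw0 : ∀ i, 0 ≤ w i)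
    (hw1 : ∑ i, w i = 1) (hf : ∀ i, 0 < w i → f i ≤ m) (hm : m ≤ ∑ i, w i * f i) {i : ι}
    (hi : 0 < w i) : f i = m := by
  have hterm : ∀ j ∈ Finset.univ, 0 ≤ w j * (m - f j) := fun j _ =>
    (hw0 j).eq_or_lt.elim (fun h => by simp [← h]) fun h => mul_nonneg h.le (sub_nonneg.2 (hf j h))
  have hsum : ∑ j, w j * (m - f j) = 0 := by
    refine le_antisymm ?_ (Finset.sum_nonneg hterm)
    simp only [mul_sub, Finset.sum_sub_distrib, ← Finset.sum_mul, hw1, one_mul]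
    linarith
  have hi0 := (Finset.sum_eq_zero_iff_of_nonneg hterm).1 hsum i (Finset.mem_univ i)
  linarith [(mul_eq_zero.1 hi0).resolve_left hi.ne']

lemma Finset.sum_eq_sum_preimage_cons {S β : Type*} [Fintype S] [AddCommMonoid β]
    {L : Finset (List S)} (hL : [] ∉ L) (f : List S → β) :
    ∑ l ∈ L, f l = ∑ s, ∑ l ∈ L.preimage (List.cons s) List.cons_injective.injOn, f (s :: l) := by
  rw [Finset.sum_sigma']
  refine (Finset.sum_bij (fun x _ => x.1 :: x.2) (fun x hx => ?_) (fun x _ y _ hxy => ?_)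
    (fun l hl => ?_) fun _ _ => rfl).symm
  · exact Finset.mem_preimage.1 (Finset.mem_sigma.1 hx).2
  · obtain ⟨a, l⟩ := x
    obtain ⟨b, m⟩ := y
    obtain ⟨rfl, rfl⟩ := List.cons_eq_cons.1 hxy
    rfl
  · cases l with
    | nil => exact absurd hl hL
    | cons a m => exact ⟨⟨a, m⟩, by simpa using hl, rfl⟩

namespace MC

variable {S A : Type}

lemma pathProb_nonneg (M : MC S A) : ∀ s l, 0 ≤ pathProb M.p s l
  | _, [] => zero_le_one
  | s, s' :: l => mul_nonneg (M.nonneg s s') (pathProb_nonneg M s' l)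

lemma sum_p_eq_one [Fintype S] (M : MC S A) (s : S) : ∑ s', M.p s s' = 1 := by
  rw [← finsum_eq_sum_of_fintype]
  exact M.sum_one s

def ReachPath (ψ : S → Prop) (s : S) (l : List S) : Prop :=
  (ψ s ∧ l = []) ∨ (¬ ψ s ∧ UntilPath (fun _ => True) ψ s l)

def IsAbsorbing (p : S → S → ℝ) (C : Set S) : Prop :=
  ∀ s ∈ C, ∀ s', 0 < p s s' → s' ∈ C

lemma IsAbsorbing.mem_of_reaches {p : S → S → ℝ} {C : Set S} (hC : IsAbsorbing p C) {s s' : S}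
    (hs : s ∈ C) (h : Reaches p s s') : s' ∈ C := by
  induction h with
  | refl => exact hs
  | tail _ hpos ih => exact hC _ ih _ hpos

section ReachPath

variable {ψ : S → Prop} {s s' : S} {l : List S}

lemma reachPath_nil : ReachPath ψ s [] ↔ ψ s := by
  refine ⟨?_, fun h => Or.inl ⟨h, rfl⟩⟩
  rintro (⟨h, -⟩ | ⟨-, h⟩)
  · exact h
  · nomatch h

lemma untilPath_cons_iff : UntilPath (fun _ => True) ψ s (s' :: l) ↔ ReachPath ψ s' l := by
  constructor
  · rintro (h | ⟨hψ, -, h⟩)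
    · exact Or.inl ⟨h, rfl⟩
    · exact Or.inr ⟨hψ, h⟩
  · rintro (⟨h, rfl⟩ | ⟨hψ, h⟩)
    · exact .single h
    · exact .cons hψ trivial h

lemma reachPath_cons : ReachPath ψ s (s' :: l) ↔ ¬ ψ s ∧ ReachPath ψ s' l := by
  rw [ReachPath, untilPath_cons_iff]
  simp

lemma ReachPath.eq_nil (h : ReachPath ψ s l) (hψ : ψ s) : l = [] :=
  h.elim And.right fun h' => absurd hψ h'.1

lemma reachProb_of_target {p : S → S → ℝ} (hψ : ψ s) : reachProb p ψ s = 1 := if_pos hψ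

lemma reachProb_eq_tsum (p : S → S → ℝ) (ψ : S → Prop) (s : S) :
    reachProb p ψ s = ∑' l : {l // ReachPath ψ s l}, pathProb p s l := by
  by_cases hψ : ψ s
  · rw [reachProb_of_target hψ, tsum_eq_single ⟨[], reachPath_nil.2 hψ⟩]
    · rfl
    · rintro ⟨l, hl⟩ hne
      exact absurd (Subtype.ext (hl.eq_nil hψ)) hne
  · rw [reachProb, if_neg hψ, untilProb,
      ← (Equiv.subtypeEquivRight (p := ReachPath ψ s) fun l => by simp [ReachPath, hψ]).tsum_eq]
    rfl

noncomputable def reachPathConsEquiv (hψ : ¬ ψ s) :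
    (Σ s', {l // ReachPath ψ s' l}) ≃ {l // ReachPath ψ s l} :=
  Equiv.ofBijective (fun x => ⟨x.1 :: x.2.1, reachPath_cons.2 ⟨hψ, x.2.2⟩⟩) <| by
    refine ⟨fun ⟨a, l, _⟩ ⟨b, m, _⟩ h => ?_, fun ⟨l, hl⟩ => ?_⟩
    · obtain ⟨rfl, rfl⟩ := List.cons_eq_cons.1 (congrArg Subtype.val h)
      rfl
    · cases l with
      | nil => exact absurd (reachPath_nil.1 hl) hψ
      | cons a m => exact ⟨⟨a, m, (reachPath_cons.1 hl).2⟩, rfl⟩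

end ReachPath

lemma reachProb_nonneg (M : MC S A) {ψ : S → Prop} (s : S) : 0 ≤ reachProb M.p ψ s := by
  rw [reachProb_eq_tsum]
  exact tsum_nonneg fun l => M.pathProb_nonneg s l

section Reachability

variable [Fintype S] (M : MC S A) {ψ : S → Prop}

lemma sum_pathProb_le_of_superharmonic {C : Set S} (hC : IsAbsorbing M.p C) {h : S → ℝ}
    (h0 : ∀ s ∈ C, 0 ≤ h s) (h1 : ∀ s ∈ C, ψ s → 1 ≤ h s)
    (hsup : ∀ s ∈ C, ¬ ψ s → ∑ s', M.p s s' * h s' ≤ h s) {s : S} (hs : s ∈ C)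
    (u : Finset {l // ReachPath ψ s l}) : ∑ l ∈ u, pathProb M.p s l ≤ h s := by
  suffices key : ∀ n, ∀ s ∈ C, ∀ L : Finset (List S), (∀ l ∈ L, ReachPath ψ s l ∧ l.length < n) →
      ∑ l ∈ L, pathProb M.p s l ≤ h s by
    rw [← Finset.sum_image fun _ _ _ _ => Subtype.ext]
    refine key ((u.image Subtype.val).sup List.length + 1) s hs _ fun l hl => ?_
    obtain ⟨x, -, rfl⟩ := Finset.mem_image.1 hl
    exact ⟨x.2, Nat.lt_succ_of_le (Finset.le_sup hl)⟩
  intro n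
  induction n with
  | zero =>
    intro s hs L hL
    rw [Finset.sum_eq_zero fun l hl => absurd (hL l hl).2 (Nat.not_lt_zero _)]
    exact h0 s hs
  | succ n ih =>
    intro s hs L hL
    by_cases hψ : ψ s
    · have hsub : L ⊆ {[]} := fun l hl => Finset.mem_singleton.2 ((hL l hl).1.eq_nil hψ)
      calc ∑ l ∈ L, pathProb M.p s l ≤ ∑ l ∈ {[]}, pathProb M.p s l :=
            Finset.sum_le_sum_of_subset_of_nonneg hsub fun l _ _ => M.pathProb_nonneg s l
        _ = 1 := by simp [pathProb]
        _ ≤ h s := h1 s hs hψ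
    have hnil : [] ∉ L := fun hl => hψ (reachPath_nil.1 (hL [] hl).1)
    rw [Finset.sum_eq_sum_preimage_cons hnil]
    simp only [pathProb, ← Finset.mul_sum]
    refine (Finset.sum_le_sum fun s' _ => ?_).trans (hsup s hs hψ)
    rcases (M.nonneg s s').eq_or_lt with hp | hp
    · simp [← hp]
    refine mul_le_mul_of_nonneg_left (ih s' (hC s hs s' hp) _ fun l hl => ?_) hp.le
    have hl' := hL _ (Finset.mem_preimage.1 hl)
    exact ⟨(reachPath_cons.1 hl'.1).2, by simpa using hl'.2⟩

theorem reachProb_le_of_superharmonic {C : Set S} (hC : IsAbsorbing M.p C) {h : S → ℝ}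
    (h0 : ∀ s ∈ C, 0 ≤ h s) (h1 : ∀ s ∈ C, ψ s → 1 ≤ h s)
    (hsup : ∀ s ∈ C, ¬ ψ s → ∑ s', M.p s s' * h s' ≤ h s) {s : S} (hs : s ∈ C) :
    reachProb M.p ψ s ≤ h s := by
  rw [reachProb_eq_tsum]
  exact tsum_le_of_sum_le' (h0 s hs) (M.sum_pathProb_le_of_superharmonic hC h0 h1 hsup hs)

lemma reachProb_le_one (s : S) : reachProb M.p ψ s ≤ 1 :=
  M.reachProb_le_of_superharmonic (C := Set.univ) (fun _ _ _ _ => trivial)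
    (fun _ _ => zero_le_one) (fun _ _ _ => le_rfl) (fun s _ _ => by simp [M.sum_p_eq_one s])
    (Set.mem_univ s)

lemma summable_pathProb (s : S) :
    Summable fun l : {l // ReachPath ψ s l} => pathProb M.p s l :=
  summable_of_sum_le (fun l => M.pathProb_nonneg s l) <|
    M.sum_pathProb_le_of_superharmonic (C := Set.univ) (h := fun _ => 1)
      (fun _ _ _ _ => trivial) (fun _ _ => zero_le_one) (fun _ _ _ => le_rfl)
      (fun s _ _ => by simp [M.sum_p_eq_one s]) (Set.mem_univ s)

theorem reachProb_eq_sum {s : S} (hψ : ¬ ψ s) :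
    reachProb M.p ψ s = ∑ s', M.p s s' * reachProb M.p ψ s' := by
  have hsum : Summable fun x : Σ s', {l // ReachPath ψ s' l} =>
      pathProb M.p s (reachPathConsEquiv hψ x).1 :=
    (reachPathConsEquiv hψ).summable_iff.2 (M.summable_pathProb s)
  rw [reachProb_eq_tsum, ← (reachPathConsEquiv hψ).tsum_eq, hsum.tsum_sigma, tsum_fintype]
  refine Finset.sum_congr rfl fun s' _ => ?_
  rw [reachProb_eq_tsum, ← tsum_mul_left]
  rfl

lemma reachProb_eq_zero_of_isAbsorbing {D : Set S} (hD : IsAbsorbing M.p D)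
    (hψ : ∀ s ∈ D, ¬ ψ s) {s : S} (hs : s ∈ D) : reachProb M.p ψ s = 0 :=
  le_antisymm
    (M.reachProb_le_of_superharmonic hD (h := 0) (fun _ _ => le_rfl)
      (fun s hs h => absurd h (hψ s hs)) (fun _ _ _ => by simp) hs)
    (M.reachProb_nonneg s)

end Reachability

/-- `0` when no path of positive probability reaches `ψ`. -/
noncomputable def hitDist (p : S → S → ℝ) (ψ : S → Prop) (s : S) : ℕ :=
  sInf {n | ∃ l, ReachPath ψ s l ∧ 0 < pathProb p s l ∧ l.length = n}

lemma exists_hitDist_lt [Fintype S] (M : MC S A) {ψ : S → Prop} {s : S} (hψ : ¬ ψ s)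
    (hpos : 0 < reachProb M.p ψ s) :
    ∃ s', 0 < M.p s s' ∧ hitDist M.p ψ s' < hitDist M.p ψ s := by
  obtain ⟨⟨l₀, hl₀⟩, hl₀pos⟩ : ∃ l : {l // ReachPath ψ s l}, 0 < pathProb M.p s l := by
    by_contra! h
    rw [reachProb_eq_tsum] at hpos
    exact hpos.not_ge (tsum_nonpos h)
  obtain ⟨l, hl, hlpos, hlen⟩ := Nat.sInf_mem
    (s := {n | ∃ l, ReachPath ψ s l ∧ 0 < pathProb M.p s l ∧ l.length = n})
    ⟨_, l₀, hl₀, hl₀pos, rfl⟩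
  cases l with
  | nil => exact absurd (reachPath_nil.1 hl) hψ
  | cons s' l =>
    refine ⟨s', pos_of_mul_pos_left hlpos (M.pathProb_nonneg s' l), ?_⟩
    have hle : hitDist M.p ψ s' ≤ l.length := Nat.sInf_le ⟨l, (reachPath_cons.1 hl).2,
      pos_of_mul_pos_right hlpos (M.nonneg s s'), rfl⟩
    have hdist : hitDist M.p ψ s = l.length + 1 := hlen.symm
    omega

theorem le_reachProb_of_subharmonic [Fintype S] (M : MC S A) {ψ : S → Prop} {C : Set S}
    (hC : IsAbsorbing M.p C) {h : S → ℝ} (h1 : ∀ s ∈ C, h s ≤ 1)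
    (hsub : ∀ s ∈ C, ¬ ψ s → h s ≤ ∑ s', M.p s s' * h s')
    (htrap : ∀ D ⊆ C, D.Nonempty → IsAbsorbing M.p D → (∀ s ∈ D, ¬ ψ s) → ∃ s ∈ D, h s ≤ 0)
    {s : S} (hs : s ∈ C) : h s ≤ reachProb M.p ψ s := by
  set d : S → ℝ := fun s => h s - reachProb M.p ψ s with hd
  by_contra! hlt
  obtain ⟨m, hmC, hmax⟩ := Set.exists_max_image C d C.toFinite ⟨s, hs⟩
  have hm : 0 < d m := (sub_pos.2 hlt).trans_le (hmax s hs)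
  set D := {s ∈ C | d s = d m}
  have hDψ : ∀ s ∈ D, ¬ ψ s := fun s hs hψ => by
    have : d s ≤ 0 := by simp only [hd, reachProb_of_target hψ, sub_nonpos, h1 s hs.1]
    linarith [hs.2]
  have hDabs : IsAbsorbing M.p D := by
    intro s hsD s' hp
    have hsub' : d m ≤ ∑ s', M.p s s' * d s' := by
      rw [← hsD.2]
      simp only [hd, mul_sub, Finset.sum_sub_distrib, ← M.reachProb_eq_sum (hDψ s hsD)]
      linarith [hsub s hsD.1 (hDψ s hsD)]
    exact ⟨hC s hsD.1 s' hp, eq_of_le_sum_mul (M.nonneg s) (M.sum_p_eq_one s)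
      (fun s' hp => hmax s' (hC s hsD.1 s' hp)) hsub' hp⟩
  obtain ⟨s₀, hs₀, hh⟩ := htrap D (fun _ hs => hs.1) ⟨m, hmC, rfl⟩ hDabs hDψ
  have : d s₀ ≤ 0 := by simpa [hd, M.reachProb_eq_zero_of_isAbsorbing hDabs hDψ hs₀] using hh
  linarith [hs₀.2]

/-- Maximising the reachability probability alone may resolve states into a cycle of the induced
chain that never reaches `α`; breaking ties by hitting distance rules this out. -/
noncomputable def reachKey (M : MC S A) (α : Set A) (s : S) : ℝ ×ₗ ℕᵒᵈ :=
  toLex (reachProb M.p (M.V · = α) s, OrderDual.toDual (hitDist M.p (M.V · = α) s))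

end MC

open MC

lemma exists_resolution {T S : Type} [Finite T] [Nonempty T] {β : Type*} [LinearOrder β]
    (R : T → S → Prop) (f : T → β) :
    ∃ σ : S → T, ∀ t s, R t s → R (σ s) s ∧ f t ≤ f (σ s) := by
  have : ∀ s, ∃ t₀, ∀ t, R t s → R t₀ s ∧ f t ≤ f t₀ := by
    intro s
    rcases {t | R t s}.eq_empty_or_nonempty with h | h
    · exact ⟨Classical.arbitrary T, fun t ht => (h.subset ht).elim⟩
    · obtain ⟨t₀, ht₀, hmax⟩ := Set.exists_max_image _ f (Set.toFinite _) h
      exact ⟨t₀, fun t ht => ⟨ht₀, hmax t ht⟩⟩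
  choose σ hσ using this
  exact ⟨σ, fun t s h => hσ s t h⟩

section Satisfaction

variable {T S A : Type} [Fintype T] [Fintype S] {M : MC T A} {I : IMC S A} {R : T → S → Prop}

/-- `IsSatRel M I R` with finite sums and with a single family `δ`; on pairs outside `R`, `δ t s`
is the coupling that sends everything to `s`, so that every `push t s` below is a distribution. -/
structure SatWitness (M : MC T A) (I : IMC S A) (R : T → S → Prop) where
  δ : T → S → T → S → ℝ
  nonneg : ∀ t s t' s', 0 ≤ δ t s t' s'
  sum_eq_one : ∀ t s t', 0 < M.p t t' → ∑ s', δ t s t' s' = 1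
  rel_init : R M.s0 I.s0
  label_eq : ∀ t s, R t s → M.V t = I.V s
  mem_Icc : ∀ t s, R t s → ∀ s',
    ∑ t', M.p t t' * δ t s t' s' ∈ Set.Icc (I.Plo s s') (I.Phi s s')
  rel_of_pos : ∀ t s, R t s → ∀ t' s', 0 < δ t s t' s' → R t' s'

lemma IsSatRel.nonempty_satWitness (hR : IsSatRel M I R) : Nonempty (SatWitness M I R) := by
  have : ∀ t s, ∃ δ : T → S → ℝ, (∀ t' s', 0 ≤ δ t' s') ∧
      (∀ t', 0 < M.p t t' → ∑ s', δ t' s' = 1) ∧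
      (R t s → (∀ s', ∑ t', M.p t t' * δ t' s' ∈ Set.Icc (I.Plo s s') (I.Phi s s')) ∧
        ∀ t' s', 0 < δ t' s' → R t' s') := by
    intro t s
    by_cases hts : R t s
    · obtain ⟨-, δ, h0, h1, h2, h3⟩ := hR.2 t s hts
      simp only [finsum_eq_sum_of_fintype] at h1 h2
      exact ⟨δ, h0, h1, fun _ => ⟨h2, h3⟩⟩
    · refine ⟨fun _ s' => if s' = s then 1 else 0, fun _ _ => ?_, by simp, fun h => absurd h hts⟩
      dsimp only
      split_ifs <;> norm_num
  choose δ h0 h1 h2 using this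
  exact ⟨δ, h0, h1, hR.1, fun t s h => (hR.2 t s h).1, fun t s h => (h2 t s h).1,
    fun t s h => (h2 t s h).2⟩

namespace SatWitness

variable (W : SatWitness M I R)

def push (t : T) (s s' : S) : ℝ := ∑ t', M.p t t' * W.δ t s t' s'

lemma push_nonneg (t : T) (s s' : S) : 0 ≤ W.push t s s' :=
  Finset.sum_nonneg fun t' _ => mul_nonneg (M.nonneg t t') (W.nonneg t s t' s')

lemma sum_push_mul_le {t : T} {s : S} {g : S → ℝ} {f : T → ℝ}
    (hgf : ∀ t' s', 0 < M.p t t' → 0 < W.δ t s t' s' → g s' ≤ f t') :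
    ∑ s', W.push t s s' * g s' ≤ ∑ t', M.p t t' * f t' := by
  simp only [push, Finset.sum_mul, mul_assoc]
  rw [Finset.sum_comm]
  refine Finset.sum_le_sum fun t' _ => ?_
  rw [← Finset.mul_sum]
  rcases (M.nonneg t t').eq_or_lt with hp | hp
  · simp [← hp]
  refine mul_le_mul_of_nonneg_left ?_ hp.le
  calc ∑ s', W.δ t s t' s' * g s' ≤ ∑ s', W.δ t s t' s' * f t' :=
        Finset.sum_le_sum fun s' _ => (W.nonneg t s t' s').eq_or_lt.elim
          (fun h => by simp [← h]) fun h => mul_le_mul_of_nonneg_left (hgf t' s' hp h) h.le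
    _ = f t' := by rw [← Finset.sum_mul, W.sum_eq_one t s t' hp, one_mul]

lemma le_sum_push_mul {t : T} {s : S} {g : S → ℝ} {f : T → ℝ}
    (hfg : ∀ t' s', 0 < M.p t t' → 0 < W.δ t s t' s' → f t' ≤ g s') :
    ∑ t', M.p t t' * f t' ≤ ∑ s', W.push t s s' * g s' := by
  have := W.sum_push_mul_le (g := -g) (f := -f) fun t' s' hp hδ => neg_le_neg (hfg t' s' hp hδ)
  simpa only [Pi.neg_apply, mul_neg, Finset.sum_neg_distrib, neg_le_neg_iff] using this

lemma sum_push (t : T) (s : S) : ∑ s', W.push t s s' = 1 := by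
  have hle := W.sum_push_mul_le (t := t) (s := s) (g := 1) (f := 1) fun _ _ _ _ => le_rfl
  have hge := W.le_sum_push_mul (t := t) (s := s) (g := 1) (f := 1) fun _ _ _ _ => le_rfl
  simp only [Pi.one_apply, mul_one, M.sum_p_eq_one] at hle hge
  exact le_antisymm hle hge

lemma exists_pos_of_push_pos {t : T} {s s' : S} (h : 0 < W.push t s s') :
    ∃ t', 0 < M.p t t' ∧ 0 < W.δ t s t' s' := by
  obtain ⟨t', -, ht'⟩ := Finset.exists_ne_zero_of_sum_ne_zero h.ne'
  have hpos := (mul_nonneg (M.nonneg t t') (W.nonneg t s t' s')).lt_of_ne' ht'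
  exact ⟨t', pos_of_mul_pos_left hpos (W.nonneg t s t' s'),
    pos_of_mul_pos_right hpos (M.nonneg t t')⟩

lemma exists_push_pos {t t' : T} (s : S) (hp : 0 < M.p t t') :
    ∃ s', 0 < W.δ t s t' s' ∧ 0 < W.push t s s' := by
  obtain ⟨s', -, hs'⟩ := Finset.exists_ne_zero_of_sum_ne_zero
    ((W.sum_eq_one t s t' hp).trans_ne one_ne_zero)
  have hδ := (W.nonneg t s t' s').lt_of_ne' hs'
  exact ⟨s', hδ, Finset.sum_pos' (fun t'' _ => mul_nonneg (M.nonneg _ _) (W.nonneg _ _ _ _))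
    ⟨t', Finset.mem_univ _, mul_pos hp hδ⟩⟩

noncomputable def toMC (σ : S → T) : MC S A where
  s0 := I.s0
  p s := W.push (σ s) s
  nonneg s := W.push_nonneg (σ s) s
  sum_one s := by rw [finsum_eq_sum_of_fintype]; exact W.sum_push (σ s) s
  V := I.V

lemma label_eq_iff (W : SatWitness M I R) {t : T} {s : S} (h : R t s) (α : Set A) :
    M.V t = α ↔ I.V s = α := by
  rw [W.label_eq t s h]

variable {σ : S → T}

lemma isAbsorbing_toMC (hσ : ∀ t s, R t s → R (σ s) s) :
    IsAbsorbing (W.toMC σ).p {s | ∃ t, R t s} := by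
  rintro s ⟨t, hts⟩ s' hp
  obtain ⟨t', -, hδ⟩ := W.exists_pos_of_push_pos hp
  exact ⟨t', W.rel_of_pos _ _ (hσ t s hts) t' s' hδ⟩

lemma satO_toMC (hσ : ∀ t s, R t s → R (σ s) s) : SatO (W.toMC σ) I := by
  refine ⟨rfl, rfl, fun s hs s' => ?_⟩
  obtain ⟨t, hts⟩ := (W.isAbsorbing_toMC hσ).mem_of_reaches ⟨M.s0, W.rel_init⟩ hs
  exact W.mem_Icc _ _ (hσ t s hts) s'

theorem preach_toMC_le (α : Set A) (hσ : ∀ t s, R t s →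
      R (σ s) s ∧ reachProb M.p (M.V · = α) (σ s) ≤ reachProb M.p (M.V · = α) t) :
    (W.toMC σ).Preach α ≤ M.Preach α := by
  have hσR : ∀ t s, R t s → R (σ s) s := fun t s h => (hσ t s h).1
  calc (W.toMC σ).Preach α ≤ reachProb M.p (M.V · = α) (σ I.s0) := by
        refine (W.toMC σ).reachProb_le_of_superharmonic (W.isAbsorbing_toMC hσR)
          (fun _ _ => reachProb_nonneg M _) ?_ ?_ ⟨M.s0, W.rel_init⟩
        · rintro s ⟨t, hts⟩ hα
          exact (reachProb_of_target (ψ := (M.V · = α)) ((W.label_eq_iff (hσR t s hts) α).2 hα)).ge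
        · rintro s ⟨t, hts⟩ hα
          rw [M.reachProb_eq_sum (mt (W.label_eq_iff (hσR t s hts) α).1 hα)]
          exact W.sum_push_mul_le fun t' s' _ hδ =>
            (hσ t' s' (W.rel_of_pos _ _ (hσR t s hts) t' s' hδ)).2
    _ ≤ M.Preach α := (hσ _ _ W.rel_init).2

lemma exists_nonpos_of_isAbsorbing (α : Set A)
    (hσ : ∀ t s, R t s → R (σ s) s ∧ M.reachKey α t ≤ M.reachKey α (σ s)) {D : Set S}
    (hDR : D ⊆ {s | ∃ t, R t s}) (hD : D.Nonempty) (hDabs : IsAbsorbing (W.toMC σ).p D)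
    (hDα : ∀ s ∈ D, ¬ I.V s = α) : ∃ s ∈ D, reachProb M.p (M.V · = α) (σ s) ≤ 0 := by
  by_contra! hpos
  obtain ⟨s, hsD, hmax⟩ := Set.exists_max_image D (M.reachKey α ∘ σ) D.toFinite hD
  obtain ⟨t, hts⟩ := hDR hsD
  have hsR := (hσ t s hts).1
  have hα : ¬ M.V (σ s) = α := mt (W.label_eq_iff hsR α).1 (hDα s hsD)
  have hsucc : ∀ t', 0 < M.p (σ s) t' → M.reachKey α t' ≤ M.reachKey α (σ s) := by
    intro t' hp
    obtain ⟨s', hδ, hpush⟩ := W.exists_push_pos s hp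
    exact (hσ t' s' (W.rel_of_pos _ _ hsR t' s' hδ)).2.trans (hmax s' (hDabs s hsD s' hpush))
  obtain ⟨t₁, hp₁, hdist⟩ := M.exists_hitDist_lt hα (hpos s hsD)
  have hP : reachProb M.p (M.V · = α) t₁ = reachProb M.p (M.V · = α) (σ s) :=
    eq_of_le_sum_mul (f := reachProb M.p (M.V · = α)) (M.nonneg _) (M.sum_p_eq_one _)
      (fun t' hp => Prod.Lex.monotone_fst _ _ (hsucc t' hp))
      (M.reachProb_eq_sum (ψ := (M.V · = α)) hα).le hp₁
  exact (hsucc t₁ hp₁).not_gt (Prod.Lex.lt_iff.2 (Or.inr ⟨hP.symm, hdist⟩))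

theorem le_preach_toMC (α : Set A)
    (hσ : ∀ t s, R t s → R (σ s) s ∧ M.reachKey α t ≤ M.reachKey α (σ s)) :
    M.Preach α ≤ (W.toMC σ).Preach α := by
  have hσR : ∀ t s, R t s → R (σ s) s := fun t s h => (hσ t s h).1
  have hle : ∀ t s, R t s →
      reachProb M.p (M.V · = α) t ≤ reachProb M.p (M.V · = α) (σ s) :=
    fun t s h => Prod.Lex.monotone_fst _ _ (hσ t s h).2
  calc M.Preach α ≤ reachProb M.p (M.V · = α) (σ I.s0) := hle _ _ W.rel_init
    _ ≤ (W.toMC σ).Preach α := by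
      refine (W.toMC σ).le_reachProb_of_subharmonic (W.isAbsorbing_toMC hσR)
        (fun _ _ => reachProb_le_one M _) ?_ (fun D hDR hD hDabs hDα =>
          W.exists_nonpos_of_isAbsorbing α hσ hDR hD hDabs hDα) ⟨M.s0, W.rel_init⟩
      rintro s ⟨t, hts⟩ hα
      rw [M.reachProb_eq_sum (mt (W.label_eq_iff (hσR t s hts) α).1 hα)]
      exact W.le_sum_push_mul fun t' s' _ hδ => hle t' s' (W.rel_of_pos _ _ (hσR t s hts) t' s' hδ)

end SatWitness

end Satisfaction

/-- if `M ⊨ᵃ I` then there are `M₁, M₂ ⊨ᵒ I` (same structure as `I`) with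
`P^{M₁}(◊α) ≤ P^{M}(◊α) ≤ P^{M₂}(◊α)`. -/
theorem stmt5 {T S A : Type} [Finite T] [Finite S]
    (M : MC T A) (I : IMC S A) (α : Set A) (h : SatA M I) :
    ∃ M₁ M₂ : MC S A, SatO M₁ I ∧ SatO M₂ I ∧
      M₁.Preach α ≤ M.Preach α ∧ M.Preach α ≤ M₂.Preach α := by
  obtain ⟨_⟩ := nonempty_fintype T
  obtain ⟨_⟩ := nonempty_fintype S
  have : Nonempty T := ⟨M.s0⟩
  obtain ⟨R, hR⟩ := h
  obtain ⟨W⟩ := hR.nonempty_satWitness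
  obtain ⟨σ₁, hσ₁⟩ := exists_resolution R fun t => OrderDual.toDual (reachProb M.p (M.V · = α) t)
  obtain ⟨σ₂, hσ₂⟩ := exists_resolution R (M.reachKey α)
  exact ⟨W.toMC σ₁, W.toMC σ₂, W.satO_toMC fun t s h => (hσ₁ t s h).1,
    W.satO_toMC fun t s h => (hσ₂ t s h).1, W.preach_toMC_le α hσ₁, W.le_preach_toMC α hσ₂⟩
end

section
/- Bisimilar Markov chains assign the same probability to reachability events: if M and M' are finite Markov chains that are probabilistically bisimilar (their initial states are related by a probabilistic bisimulation), then for every state label α, P^M(◊α) = P^{M'}(◊α). -/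
open Classical

namespace Stmt8Aux

variable {U : Type} [Fintype U]

/-- `n`-step approximation of the reachability probability. -/
noncomputable def gA (p : U → U → ℝ) (ψ : U → Prop) : ℕ → U → ℝ
  | 0 => fun s => if ψ s then 1 else 0
  | n+1 => fun s => if ψ s then 1 else ∑ s', p s s' * gA p ψ n s'

lemma gA_of_pos {p : U → U → ℝ} {ψ : U → Prop} {s : U} (h : ψ s) :
    ∀ n, gA p ψ n s = 1
  | 0 => by simp [gA, h]
  | n+1 => by simp [gA, h]

lemma gA_nonneg {p : U → U → ℝ} (hp : ∀ s s', 0 ≤ p s s') (ψ : U → Prop) :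
    ∀ n s, 0 ≤ gA p ψ n s
  | 0, s => by by_cases h : ψ s <;> simp [gA, h]
  | n+1, s => by
      by_cases h : ψ s
      · simp [gA, h]
      · simp only [gA, h, if_false]
        exact Finset.sum_nonneg fun s' _ => mul_nonneg (hp s s') (gA_nonneg hp ψ n s')

lemma gA_le_one {p : U → U → ℝ} (hp : ∀ s s', 0 ≤ p s s')
    (hp1 : ∀ s, ∑ s', p s s' = 1) (ψ : U → Prop) : ∀ n s, gA p ψ n s ≤ 1
  | 0, s => by by_cases h : ψ s <;> simp [gA, h]
  | n+1, s => by
      by_cases h : ψ s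
      · simp [gA, h]
      · simp only [gA, h, if_false]
        calc ∑ s', p s s' * gA p ψ n s' ≤ ∑ s', p s s' * 1 :=
              Finset.sum_le_sum fun i _ =>
                mul_le_mul_of_nonneg_left (gA_le_one hp hp1 ψ n i) (hp s i)
          _ = 1 := by simpa using hp1 s

/-- The finite set of until-paths (for `φ = ⊤`) of length at most `n`. -/
noncomputable def Lfin (ψ : U → Prop) : ℕ → Finset (List U)
  | 0 => ∅
  | n+1 => Finset.univ.biUnion fun s' =>
      (if ψ s' then ({[]} : Finset (List U)) else Lfin ψ n).image (s' :: ·)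

lemma untilPath_of_mem_Lfin {ψ : U → Prop} (s : U) :
    ∀ {n : ℕ} {l : List U}, l ∈ Lfin ψ n →
      MC.UntilPath (fun _ => True) ψ s l ∧ l.length ≤ n
  | 0, l => by simp [Lfin]
  | n+1, l => by
      intro hl
      simp only [Lfin, Finset.mem_biUnion, Finset.mem_image, Finset.mem_univ, true_and] at hl
      obtain ⟨s', l', hl', rfl⟩ := hl
      by_cases hψ : ψ s'
      · simp only [if_pos hψ, Finset.mem_singleton] at hl'
        subst hl'
        exact ⟨MC.UntilPath.single hψ, by simp⟩
      · simp only [if_neg hψ] at hl'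
        obtain ⟨h1, h2⟩ := untilPath_of_mem_Lfin s' hl'
        exact ⟨MC.UntilPath.cons hψ trivial h1, by simpa using h2⟩

lemma mem_Lfin_of_untilPath {ψ : U → Prop} {s : U} {l : List U}
    (h : MC.UntilPath (fun _ => True) ψ s l) :
    ∀ {n : ℕ}, l.length ≤ n → l ∈ Lfin ψ n := by
  induction h with
  | @single s s' hψ =>
      intro n hn
      match n, hn with
      | n+1, _ =>
        simp only [Lfin, Finset.mem_biUnion, Finset.mem_univ, true_and]
        exact ⟨s', by simp [if_pos hψ]⟩
  | @cons s s' l' hψ hφ h ih =>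
      intro n hn
      match n, hn with
      | n+1, hn =>
        simp only [Lfin, Finset.mem_biUnion, Finset.mem_univ, true_and]
        refine ⟨s', ?_⟩
        rw [if_neg hψ]
        exact Finset.mem_image_of_mem _ (ih (by simpa using hn))

lemma pathProb_nonneg {p : U → U → ℝ} (hp : ∀ s s', 0 ≤ p s s') :
    ∀ (s : U) (l : List U), 0 ≤ MC.pathProb p s l
  | _, [] => by simp [MC.pathProb]
  | s, s' :: l => mul_nonneg (hp s s') (pathProb_nonneg hp s' l)

/-- Partial path-sum approximation. -/
noncomputable def uP (p : U → U → ℝ) (ψ : U → Prop) (n : ℕ) (s : U) : ℝ :=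
  ∑ l ∈ Lfin ψ n, MC.pathProb p s l

lemma uP_succ (p : U → U → ℝ) (ψ : U → Prop) (n : ℕ) (s : U) :
    uP p ψ (n+1) s = ∑ s', p s s' * (if ψ s' then 1 else uP p ψ n s') := by
  unfold uP
  show ∑ l ∈ Finset.univ.biUnion _, MC.pathProb p s l = _
  rw [Finset.sum_biUnion]
  · refine Finset.sum_congr rfl fun s' _ => ?_
    rw [Finset.sum_image (fun a _ b _ hab => (List.cons.inj hab).2)]
    by_cases hψ : ψ s'
    · simp [if_pos hψ, MC.pathProb]
    · rw [if_neg hψ, if_neg hψ, Finset.mul_sum]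
      exact Finset.sum_congr rfl fun l _ => rfl
  · intro x _ y _ hxy
    simp only [Finset.disjoint_left]
    rintro l hx hy
    simp only [Finset.mem_image] at hx hy
    obtain ⟨a, _, rfl⟩ := hx
    obtain ⟨b, _, h⟩ := hy
    exact hxy ((List.cons.inj h).1).symm

lemma gA_eq_uP (p : U → U → ℝ) (ψ : U → Prop) :
    ∀ (n : ℕ) (s : U), gA p ψ n s = if ψ s then 1 else uP p ψ n s
  | 0, s => by by_cases h : ψ s <;> simp [gA, uP, Lfin, h]
  | n+1, s => by
      by_cases h : ψ s
      · simp [gA, h]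
      · simp only [gA, if_neg h, uP_succ]
        exact Finset.sum_congr rfl fun s' _ => by rw [gA_eq_uP p ψ n s']

lemma gA_reach_eq (p : U → U → ℝ) (hp : ∀ s s', 0 ≤ p s s')
    (hp1 : ∀ s, ∑ s', p s s' = 1) (ψ : U → Prop) (s : U) :
    MC.reachProb p ψ s = ⨆ n, gA p ψ n s := by
  by_cases h : ψ s
  · rw [MC.reachProb, if_pos h]
    simp [fun n => gA_of_pos (p := p) h n]
  · rw [MC.reachProb, if_neg h, MC.untilProb]
    set f : {l : List U // MC.UntilPath (fun _ => True) ψ s l} → ℝ :=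
      fun l => MC.pathProb p s l.1 with hf
    have hbdd : BddAbove (Set.range fun n => gA p ψ n s) :=
      ⟨1, by rintro _ ⟨n, rfl⟩; exact gA_le_one hp hp1 ψ n s⟩
    have key : ∀ F : Finset {l : List U // MC.UntilPath (fun _ => True) ψ s l},
        ∑ l ∈ F, f l ≤ gA p ψ (F.sup fun l => l.1.length) s := by
      intro F
      set m := F.sup fun l => l.1.length with hm
      have hsub : F.image Subtype.val ⊆ Lfin ψ m := by
        intro l hl
        simp only [Finset.mem_image] at hl
        obtain ⟨⟨l, hl'⟩, hmem, rfl⟩ := hl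
        exact mem_Lfin_of_untilPath hl' (Finset.le_sup (f := fun l : {l : List U // MC.UntilPath (fun _ => True) ψ s l} => l.1.length) hmem)
      calc ∑ l ∈ F, f l = ∑ l ∈ F.image Subtype.val, MC.pathProb p s l := by
            rw [Finset.sum_image (fun a _ b _ hab => Subtype.ext hab)]
        _ ≤ ∑ l ∈ Lfin ψ m, MC.pathProb p s l :=
            Finset.sum_le_sum_of_subset_of_nonneg hsub
              (fun l _ _ => pathProb_nonneg hp s l)
        _ = uP p ψ m s := rfl
        _ = gA p ψ m s := by rw [gA_eq_uP, if_neg h]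
    have hLUB : IsLUB (Set.range fun F : Finset {l : List U // MC.UntilPath (fun _ => True) ψ s l} => ∑ l ∈ F, f l) (⨆ n, gA p ψ n s) := by
      constructor
      · rintro _ ⟨F, rfl⟩
        exact (key F).trans (le_ciSup hbdd _)
      · intro b hb
        refine ciSup_le fun n => ?_
        have h1 : gA p ψ n s = ∑ l ∈ (Lfin ψ n).subtype
            (fun l => MC.UntilPath (fun _ => True) ψ s l), f l := by
          rw [gA_eq_uP, if_neg h, Finset.sum_subtype_eq_sum_filter]
          rw [Finset.filter_true_of_mem
            (fun l hl => (untilPath_of_mem_Lfin s hl).1)]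
          rfl
        rw [h1]
        exact hb ⟨_, rfl⟩
    exact ((hasSum_of_isLUB_of_nonneg (f := f) _
      (fun l => pathProb_nonneg hp s l.1) hLUB).tsum_eq)

lemma sum_mul_eq_of_classes {q : U → U → ℝ} {B : U → U → Prop} {a b : U}
    (h : ∀ C : Set U, (∀ x y, B x y → (x ∈ C ↔ y ∈ C)) →
      (∑ᶠ c ∈ C, q a c) = ∑ᶠ c ∈ C, q b c)
    (f : U → ℝ) (hf : ∀ x y, B x y → f x = f y) :
    ∑ c, q a c * f c = ∑ c, q b c * f c := by
  have hmain : ∀ u : U, (∑ c, q u c * f c)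
      = ∑ v ∈ Finset.univ.image f,
          (∑ᶠ c ∈ {c : U | f c = v}, q u c) * v := by
    intro u
    have h0 : (∑ c, q u c * f c)
        = ∑ c ∈ Finset.univ.filter (fun c => f c ∈ Finset.univ.image f), q u c * f c := by
      rw [Finset.filter_true_of_mem fun c _ => Finset.mem_image_of_mem f (Finset.mem_univ c)]
    rw [h0, ← Finset.sum_fiberwise_eq_sum_filter]
    refine Finset.sum_congr rfl fun v _ => ?_
    have h1 : ({c : U | f c = v} : Set U) = ↑(Finset.univ.filter fun c => f c = v) := by
      ext c; simp
    rw [h1, finsum_mem_coe_finset, Finset.sum_mul]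
    exact (Finset.sum_congr rfl fun c hc => by rw [(Finset.mem_filter.1 hc).2]).symm
  rw [hmain a, hmain b]
  refine Finset.sum_congr rfl fun v _ => ?_
  rw [h {c | f c = v} (fun x y hxy => by simp only [Set.mem_setOf_eq, hf x y hxy])]

end Stmt8Aux

open Stmt8Aux in
/-- bisimilar Markov chains have the same reachability probabilities. -/
theorem stmt8 {S T A : Type} [Finite S] [Finite T] (M : MC S A) (N : MC T A)
    (h : Bisimilar M N) : ∀ α : Set A, M.Preach α = N.Preach α := by
  intro α
  obtain ⟨B, hBeq, hB0, hB⟩ := h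
  cases nonempty_fintype S
  cases nonempty_fintype T
  set q : S ⊕ T → S ⊕ T → ℝ := sumP M N with hq
  set ψ : S ⊕ T → Prop := fun x => sumV M N x = α with hψdef
  have hMp1 : ∀ s, ∑ s', M.p s s' = 1 := fun s => by
    rw [← finsum_eq_sum_of_fintype]; exact M.sum_one s
  have hNp1 : ∀ t, ∑ t', N.p t t' = 1 := fun t => by
    rw [← finsum_eq_sum_of_fintype]; exact N.sum_one t
  have hlab : ∀ a b, B a b → (ψ a ↔ ψ b) := fun a b hab => by
    simp only [hψdef, (hB a b hab).1]
  have inv : ∀ (n : ℕ) (a b : S ⊕ T), B a b → gA q ψ n a = gA q ψ n b := by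
    intro n
    induction n with
    | zero =>
        intro a b hab
        simp only [gA]
        by_cases h1 : ψ a
        · rw [if_pos h1, if_pos ((hlab a b hab).1 h1)]
        · rw [if_neg h1, if_neg (fun h2 => h1 ((hlab a b hab).2 h2))]
    | succ n ih =>
        intro a b hab
        simp only [gA]
        by_cases h1 : ψ a
        · rw [if_pos h1, if_pos ((hlab a b hab).1 h1)]
        · rw [if_neg h1, if_neg (fun h2 => h1 ((hlab a b hab).2 h2))]
          exact sum_mul_eq_of_classes ((hB a b hab).2) _ (fun x y hxy => ih x y hxy)
  have resL : ∀ (n : ℕ) (s : S), gA q ψ n (Sum.inl s) = gA M.p (fun s => M.V s = α) n s := by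
    intro n
    induction n with
    | zero =>
        intro s
        simp only [gA]
        by_cases h1 : M.V s = α
        · rw [if_pos (show ψ (Sum.inl s) from h1), if_pos h1]
        · rw [if_neg (show ¬ ψ (Sum.inl s) from h1), if_neg h1]
    | succ n ih =>
        intro s
        simp only [gA]
        by_cases h1 : M.V s = α
        · rw [if_pos (show ψ (Sum.inl s) from h1), if_pos h1]
        · rw [if_neg (show ¬ ψ (Sum.inl s) from h1), if_neg h1]
          rw [Fintype.sum_sum_type]
          have h3 : (∑ t' : T, q (Sum.inl s) (Sum.inr t') * gA q ψ n (Sum.inr t')) = 0 :=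
            Finset.sum_eq_zero fun t' _ => by
              rw [show q (Sum.inl s) (Sum.inr t') = 0 from rfl, zero_mul]
          rw [h3, add_zero]
          exact Finset.sum_congr rfl fun s' _ => by
            rw [show q (Sum.inl s) (Sum.inl s') = M.p s s' from rfl, ih s']
  have resR : ∀ (n : ℕ) (t : T), gA q ψ n (Sum.inr t) = gA N.p (fun t => N.V t = α) n t := by
    intro n
    induction n with
    | zero =>
        intro t
        simp only [gA]
        by_cases h1 : N.V t = α
        · rw [if_pos (show ψ (Sum.inr t) from h1), if_pos h1]
        · rw [if_neg (show ¬ ψ (Sum.inr t) from h1), if_neg h1]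
    | succ n ih =>
        intro t
        simp only [gA]
        by_cases h1 : N.V t = α
        · rw [if_pos (show ψ (Sum.inr t) from h1), if_pos h1]
        · rw [if_neg (show ¬ ψ (Sum.inr t) from h1), if_neg h1]
          rw [Fintype.sum_sum_type]
          have h3 : (∑ s' : S, q (Sum.inr t) (Sum.inl s') * gA q ψ n (Sum.inl s')) = 0 :=
            Finset.sum_eq_zero fun s' _ => by
              rw [show q (Sum.inr t) (Sum.inl s') = 0 from rfl, zero_mul]
          rw [h3, zero_add]
          exact Finset.sum_congr rfl fun t' _ => by
            rw [show q (Sum.inr t) (Sum.inr t') = N.p t t' from rfl, ih t']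
  have hreachM := gA_reach_eq M.p M.nonneg hMp1 (fun s => M.V s = α) M.s0
  have hreachN := gA_reach_eq N.p N.nonneg hNp1 (fun t => N.V t = α) N.s0
  show MC.reachProb M.p (fun s => M.V s = α) M.s0
      = MC.reachProb N.p (fun t => N.V t = α) N.s0
  rw [hreachM, hreachN]
  exact iSup_congr fun n => by
    rw [← resL n M.s0, ← resR n N.s0]; exact inv n _ _ hB0
end

section
/- There is no finite parametric Markov chain equivalent to the 2-state interval Markov chain I under the at-every-step semantics, where I has states s1 (labeled α, initial) and s0 (labeled β), transitions P(s1,s1) = [0,1], P(s1,s0) = [0,1], P(s0,s0) = [1,1]. Specifically, for every n, the pMC with states s1,...,sn (labeled α) and s0 (labeled β) and parametric transitions p_i on the self-loop of s_i, q_i from s_i to s0 and 1−p_i−q_i from s_i to s_{i+1} (with 1−p_n from s_n to s0), is entailed by I but not equivalent to I: there exists a Markov chain satisfying I (at-every-step) that is not bisimilar to any instance of the pMC. -/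
open Classical

/-- The 2-state IMC `I`: state `1` (labeled `α`, initial), state `0` (labeled `β`);
`P(1,1) = [0,1]`, `P(1,0) = [0,1]`, `P(0,0) = [1,1]`, `P(0,1) = [0,0]`. -/
def I9 : IMC (Fin 2) Unit where
  s0 := 1
  Plo := fun i j => if i = 0 ∧ j = 0 then 1 else 0
  Phi := fun i j => if i = 0 then (if j = 0 then 1 else 0) else 1
  V := fun i => if i = 0 then ∅ else Set.univ

/-- Transition function of the pMC `P_n` under a valuation of the parameters
`p_i` (self-loops) and `q_i` (jumps to the absorbing `β`-state `0`). -/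
def pmcP (n : ℕ) (pv qv : ℕ → ℝ) : Fin (n + 1) → Fin (n + 1) → ℝ := fun i j =>
  if i.val = 0 then (if j.val = 0 then 1 else 0)
  else if i.val < n then
    (if j = i then pv i.val
     else if j.val = 0 then qv i.val
     else if j.val = i.val + 1 then 1 - pv i.val - qv i.val
     else 0)
  else (if j = i then pv i.val else if j.val = 0 then 1 - pv i.val else 0)

/-- Labels of the pMC `P_n`: state `0` is labeled `β = ∅`, states `1,…,n` are
labeled `α = univ`. -/
def pmcV (n : ℕ) : Fin (n + 1) → Set Unit := fun i => if i.val = 0 then ∅ else Set.univ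

/-- `N` is an instance (implementation) of the pMC `P_n`: its transition function comes
from some parameter valuation. -/
def IsInst9 (n : ℕ) (N : MC (Fin (n + 1)) Unit) : Prop :=
  N.s0.val = 1 ∧ N.V = pmcV n ∧ ∃ pv qv : ℕ → ℝ, N.p = pmcP n pv qv

/-!
Every instance of `P_n` satisfies `I` at every step, witnessed by relating each state to the
state of `I` with the same label: the `β`-state is absorbing and all other states are
`α`-states. Hence `P_n` is entailed by `I`, via the identity bisimulation.

For the converse, the chain walking deterministically through `n + 1` `α`-states into an
absorbing `β`-state satisfies `I`. "Every path first reaches `β` after exactly `k` steps" is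
preserved by bisimulation, because for `k + 1` it says that the state moves with probability
one into the (bisimulation-closed) set of states with the property for `k`. In an instance of
`P_n`, a state `s_i` with this property for `k ≥ 2` has no self-loop (`k` would not be unique)
and no jump to `β`, so it moves to `s_{i+1}`. Thus `i + k ≤ n + 1`, which fails for `s_1` and
`k = n + 1`.
-/

theorem finsum_mem_eq_one_iff_of_finsum_eq_one {ι : Type*} {f : ι → ℝ} (hf0 : ∀ i, 0 ≤ f i)
    (hf1 : ∑ᶠ i, f i = 1) (D : Set ι) : ∑ᶠ i ∈ D, f i = 1 ↔ ∀ i, 0 < f i → i ∈ D := by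
  have hfin : (Function.support f).Finite := hasFiniteSupport_of_finsum_eq_one hf1
  have hsplit := finsum_mem_inter_add_sdiff (f := f) D hfin
  rw [finsum_mem_support, hf1, Set.inter_comm, finsum_mem_inter_support] at hsplit
  have houtside : ∑ᶠ i ∈ Function.support f \ D, f i = 0 ↔
      ∀ i ∈ Function.support f \ D, f i = 0 := by
    rw [finsum_mem_eq_finite_toFinset_sum _ hfin.sdiff,
      Finset.sum_eq_zero_iff_of_nonneg fun i _ => hf0 i]
    simp only [Set.Finite.mem_toFinset]
  constructor
  · intro hD i hi
    by_contra hiD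
    exact hi.ne' (houtside.1 (by linarith) i ⟨hi.ne', hiD⟩)
  · intro hD
    have : ∑ᶠ i ∈ Function.support f \ D, f i = 0 :=
      houtside.2 fun i ⟨hi, hiD⟩ => absurd (hD i ((hf0 i).lt_of_ne' hi)) hiD
    linarith

theorem exists_pos_of_finsum_eq_one {ι : Type*} {f : ι → ℝ} (hf0 : ∀ i, 0 ≤ f i)
    (hf1 : ∑ᶠ i, f i = 1) : ∃ i, 0 < f i := by
  by_contra! h
  have := (finsum_mem_eq_one_iff_of_finsum_eq_one hf0 hf1 ∅).2 fun i hi => absurd hi (h i).not_gt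
  simp at this

section SurelyHits

variable {U A : Type} (p : U → U → ℝ) (V : U → Set A) (β : Set A)

def SurelyHitsAt : ℕ → U → Prop
  | 0, a => V a = β
  | k + 1, a => V a ≠ β ∧ ∀ c, 0 < p a c → SurelyHitsAt k c

variable {p V β}

theorem SurelyHitsAt.unique (hp : ∀ a, ∃ c, 0 < p a c) :
    ∀ {k m : ℕ} {a : U}, SurelyHitsAt p V β k a → SurelyHitsAt p V β m a → k = m
  | 0, 0, _, _, _ => rfl
  | 0, _ + 1, _, h, h' => absurd h h'.1
  | _ + 1, 0, _, h, h' => absurd h' h.1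
  | _ + 1, _ + 1, a, h, h' => by
    obtain ⟨c, hc⟩ := hp a
    rw [SurelyHitsAt.unique hp (h.2 c hc) (h'.2 c hc)]

theorem surelyHitsAt_succ_iff (hp0 : ∀ a c, 0 ≤ p a c) (hp1 : ∀ a, ∑ᶠ c, p a c = 1) (k : ℕ)
    (a : U) : SurelyHitsAt p V β (k + 1) a ↔
      V a ≠ β ∧ ∑ᶠ c ∈ {c | SurelyHitsAt p V β k c}, p a c = 1 := by
  rw [finsum_mem_eq_one_iff_of_finsum_eq_one (hp0 a) (hp1 a)]
  rfl

end SurelyHits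

section Bisimulation

variable {S T A : Type}

theorem sumP_nonneg (M : MC S A) (N : MC T A) (a c : S ⊕ T) : 0 ≤ sumP M N a c := by
  rcases a with x | x <;> rcases c with y | y <;> simp [sumP, M.nonneg, N.nonneg]

theorem finsum_sumP [Finite S] [Finite T] (M : MC S A) (N : MC T A) (a : S ⊕ T) :
    ∑ᶠ c, sumP M N a c = 1 := by
  have := Fintype.ofFinite S
  have := Fintype.ofFinite T
  rw [finsum_eq_sum_of_fintype, Fintype.sum_sum_type]
  rcases a with x | x
  · simpa [sumP, ← finsum_eq_sum_of_fintype] using M.sum_one x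
  · simpa [sumP, ← finsum_eq_sum_of_fintype] using N.sum_one x

theorem sumP_swap (M : MC S A) (a c : S ⊕ S) : sumP M M a.swap c.swap = sumP M M a c := by
  rcases a with x | x <;> rcases c with y | y <;> rfl

theorem surelyHitsAt_sumP_inl (M : MC S A) (N : MC T A) (β : Set A) (k : ℕ) (s : S) :
    SurelyHitsAt (sumP M N) (sumV M N) β k (.inl s) ↔ SurelyHitsAt M.p M.V β k s := by
  induction k generalizing s with
  | zero => rfl
  | succ k ih =>
    simp only [SurelyHitsAt, Sum.forall, ih, sumP, lt_self_iff_false, false_imp_iff,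
      implies_true, and_true]
    rfl

theorem surelyHitsAt_sumP_inr (M : MC S A) (N : MC T A) (β : Set A) (k : ℕ) (t : T) :
    SurelyHitsAt (sumP M N) (sumV M N) β k (.inr t) ↔ SurelyHitsAt N.p N.V β k t := by
  induction k generalizing t with
  | zero => rfl
  | succ k ih =>
    simp only [SurelyHitsAt, Sum.forall, ih, sumP, lt_self_iff_false, false_imp_iff,
      implies_true, true_and]
    rfl

theorem Bisimilar.refl (M : MC S A) : Bisimilar M M := by
  refine ⟨fun a b => a.elim id id = b.elim id id, ⟨fun _ => rfl, Eq.symm, Eq.trans⟩, rfl, ?_⟩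
  intro a b hab
  refine ⟨by rcases a with x | x <;> rcases b with y | y <;> simp_all [sumV], fun C hC => ?_⟩
  have hswap : ∀ c, c.swap ∈ C ↔ c ∈ C := fun c => hC _ _ (by rcases c <;> rfl)
  rcases a with x | x <;> rcases b with y | y <;>
    simp only [Sum.elim_inl, Sum.elim_inr, id] at hab <;> subst hab
  · rfl
  · exact finsum_mem_eq_of_bijOn Sum.swap ((Equiv.sumComm S S).bijOn hswap)
      fun c _ => (sumP_swap M _ c).symm
  · exact finsum_mem_eq_of_bijOn Sum.swap ((Equiv.sumComm S S).bijOn hswap)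
      fun c _ => (sumP_swap M _ c).symm
  · rfl

theorem Bisimilar.surelyHitsAt_iff [Finite S] [Finite T] {M : MC S A} {N : MC T A}
    (h : Bisimilar M N) (β : Set A) (k : ℕ) :
    SurelyHitsAt M.p M.V β k M.s0 ↔ SurelyHitsAt N.p N.V β k N.s0 := by
  obtain ⟨B, -, hinit, hstep⟩ := h
  have hB : ∀ k a b, B a b → (SurelyHitsAt (sumP M N) (sumV M N) β k a ↔
      SurelyHitsAt (sumP M N) (sumV M N) β k b) := by
    intro k
    induction k with
    | zero => intro a b hab; simp only [SurelyHitsAt, (hstep a b hab).1]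
    | succ k ih =>
      intro a b hab
      rw [surelyHitsAt_succ_iff (sumP_nonneg M N) (finsum_sumP M N),
        surelyHitsAt_succ_iff (sumP_nonneg M N) (finsum_sumP M N), (hstep a b hab).1,
        (hstep a b hab).2 {c | _} fun x y hxy => ih x y hxy]
  rw [← surelyHitsAt_sumP_inl M N, ← surelyHitsAt_sumP_inr M N]
  exact hB k _ _ hinit

end Bisimulation

theorem satA_I9_of_isClosed {T : Type} (W : MC T Unit) (hs0 : W.V W.s0 = Set.univ)
    (hclosed : ∀ t t', W.V t = ∅ → 0 < W.p t t' → W.V t' = ∅) : SatA W I9 := by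
  refine ⟨fun t s => W.V t = I9.V s, by simp [I9, hs0], fun t s hts => ?_⟩
  refine ⟨hts, fun t' s' => if W.V t' = I9.V s' then 1 else 0, fun _ _ => by positivity,
    fun t' _ => ?_, fun s' => ?_, fun t' s' hδ => ?_⟩
  · rw [finsum_eq_sum_of_fintype, Fin.sum_univ_two]
    rcases (W.V t').eq_empty_or_nonempty with h | h
    · simp [I9, h, Set.empty_ne_univ]
    · simp [I9, h.eq_univ]
  · fin_cases s
    · have hδ : ∀ t', W.p t t' * (if W.V t' = I9.V s' then 1 else 0) =
          W.p t t' * (if s' = 0 then 1 else 0) := by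
        intro t'
        rcases (W.nonneg t t').eq_or_lt with h | h
        · simp [← h]
        · have hβ : W.V t' = ∅ := hclosed t t' (by simpa [I9] using hts) h
          fin_cases s' <;> simp [I9, hβ, Set.empty_ne_univ]
      simp_rw [hδ, ← finsum_mul, W.sum_one]
      fin_cases s' <;> simp [I9]
    · have hfin := hasFiniteSupport_of_finsum_eq_one (W.sum_one t)
      refine ⟨by simpa [I9] using finsum_nonneg fun t' =>
        mul_nonneg (W.nonneg t t') (by split_ifs <;> norm_num), ?_⟩
      calc ∑ᶠ t', W.p t t' * (if W.V t' = I9.V s' then 1 else 0)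
          ≤ ∑ᶠ t', W.p t t' :=
            finsum_le_finsum' (hfin.subset (Function.support_mul_subset_left _ _)) hfin
              fun t' => by split_ifs <;> simp [W.nonneg]
        _ = I9.Phi 1 s' := by simp [I9, W.sum_one]
  · dsimp only at hδ ⊢
    split_ifs at hδ with h
    · exact h
    · exact absurd hδ (lt_irrefl 0)

-- `0` is absorbing because `0 - 1 = 0` in `ℕ`.
def countdownMC (n : ℕ) : MC (Fin (n + 2)) Unit where
  s0 := Fin.last (n + 1)
  p i j := if j.val = i.val - 1 then 1 else 0
  nonneg _ _ := by positivity
  sum_one i := by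
    have hj : ∀ j : Fin (n + 2), j.val = i.val - 1 ↔ j = ⟨i.val - 1, by omega⟩ :=
      fun j => by simp [Fin.ext_iff]
    simp [finsum_eq_sum_of_fintype, hj]
  V i := if i.val = 0 then ∅ else Set.univ

theorem countdownMC_V (n : ℕ) (i : Fin (n + 2)) :
    (countdownMC n).V i = if i.val = 0 then ∅ else Set.univ := rfl

theorem countdownMC_p (n : ℕ) (i j : Fin (n + 2)) :
    (countdownMC n).p i j = if j.val = i.val - 1 then 1 else 0 := rfl

theorem countdownMC_surelyHitsAt (n : ℕ) (i : Fin (n + 2)) :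
    SurelyHitsAt (countdownMC n).p (countdownMC n).V ∅ i.val i := by
  suffices h : ∀ k (i : Fin (n + 2)), i.val = k →
      SurelyHitsAt (countdownMC n).p (countdownMC n).V ∅ k i from h _ i rfl
  intro k
  induction k with
  | zero => intro i hi; exact (countdownMC_V n i).trans (if_pos hi)
  | succ k ih =>
    intro i hi
    refine ⟨by simp [countdownMC_V, hi], fun c hc => ih c ?_⟩
    rw [countdownMC_p] at hc
    split_ifs at hc with h
    · omega
    · exact absurd hc (lt_irrefl 0)

theorem satA_countdownMC (n : ℕ) : SatA (countdownMC n) I9 := by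
  refine satA_I9_of_isClosed _ (by simp [countdownMC]) fun t t' ht hpos => ?_
  rw [countdownMC_V] at ht ⊢
  rw [countdownMC_p] at hpos
  split_ifs at ht hpos with h1 h2 <;> simp_all

section ParametricChain

variable {n : ℕ}

theorem pmcP_pos {pv qv : ℕ → ℝ} {i j : Fin (n + 1)} (h : 0 < pmcP n pv qv i j) :
    j.val = 0 ∨ i.val ≠ 0 ∧ (j = i ∨ j.val = i.val + 1) := by
  unfold pmcP at h
  split_ifs at h <;> simp_all

theorem IsInst9.satA {N : MC (Fin (n + 1)) Unit} (hN : IsInst9 n N) : SatA N I9 := by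
  obtain ⟨hs0, hV, pv, qv, hp⟩ := hN
  refine satA_I9_of_isClosed N (by simp [hV, pmcV, hs0]) fun t t' ht hpos => ?_
  rw [hp] at hpos
  rw [hV] at ht ⊢
  rcases pmcP_pos hpos with h | ⟨h, -⟩
  · simp [pmcV, h]
  · simp [pmcV, h] at ht

theorem surelyHitsAt_pmc_le {N : MC (Fin (n + 1)) Unit} {pv qv : ℕ → ℝ} (hV : N.V = pmcV n)
    (hp : N.p = pmcP n pv qv) {m : ℕ} {i : Fin (n + 1)}
    (hi : SurelyHitsAt N.p N.V ∅ m i) : i.val + m ≤ n + 1 := by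
  have hrow : ∀ a, ∃ c, 0 < N.p a c :=
    fun a => exists_pos_of_finsum_eq_one (N.nonneg a) (N.sum_one a)
  induction m generalizing i with
  | zero => omega
  | succ k ih =>
    obtain ⟨c, hc⟩ := hrow i
    have hck := hi.2 c hc
    rw [hp] at hc
    rcases pmcP_pos hc with hc0 | ⟨-, rfl | hsucc⟩
    · cases k with
      | zero => omega
      | succ k => exact absurd (by simp [hV, pmcV, hc0]) hck.1
    · exact absurd (hck.unique hrow hi) (by omega)
    · have := ih hck
      omega

end ParametricChain

theorem stmt9_general (n : ℕ) :
    (∀ N : MC (Fin (n + 1)) Unit, IsInst9 n N →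
      ∃ (U : Type) (_ : Finite U) (M' : MC U Unit), SatA M' I9 ∧ Bisimilar N M') ∧
    ∃ (U : Type) (_ : Finite U) (M : MC U Unit), SatA M I9 ∧
      ∀ N : MC (Fin (n + 1)) Unit, IsInst9 n N → ¬ Bisimilar M N := by
  refine ⟨fun N hN => ⟨_, inferInstance, N, hN.satA, Bisimilar.refl N⟩,
    _, inferInstance, countdownMC n, satA_countdownMC n, ?_⟩
  rintro N ⟨hs0, hV, pv, qv, hp⟩ hbisim
  have hM : SurelyHitsAt (countdownMC n).p (countdownMC n).V ∅ (n + 1) (countdownMC n).s0 :=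
    countdownMC_surelyHitsAt n (Fin.last (n + 1))
  have hN := surelyHitsAt_pmc_le hV hp ((hbisim.surelyHitsAt_iff ∅ (n + 1)).1 hM)
  omega

/-- for every `n ≥ 1`, the pMC `P_n` is entailed by the IMC `I` (every
instance of `P_n` is bisimilar to some at-every-step implementation of `I`) but not
equivalent to it: some MC satisfying `I` at-every-step is bisimilar to no instance
of `P_n`. -/
theorem stmt9 (n : ℕ) (hn : 1 ≤ n) :
    (∀ N : MC (Fin (n + 1)) Unit, IsInst9 n N →
      ∃ (U : Type) (_ : Finite U) (M' : MC U Unit), SatA M' I9 ∧ Bisimilar N M') ∧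
    ∃ (U : Type) (_ : Finite U) (M : MC U Unit), SatA M I9 ∧
      ∀ N : MC (Fin (n + 1)) Unit, IsInst9 n N → ¬ Bisimilar M N :=
  stmt9_general n
end

section
/- Let P = (S, s0, P, V, Y) be a parametric interval Markov chain with the once-and-for-all semantics. P is existentially consistent (some Markov chain satisfies some IMC instance of P) if and only if there exist: a parameter valuation v : Y → [0,1], a subset R ⊆ S of 'active' states with s0 ∈ R, and transition values θ_{s,s'} ∈ [0,1] for s' ∈ Succ(s), such that: (i) for every non-initial s, s ∉ R iff Σ_{s'∈Pred(s)\{s}} θ_{s',s} = 0; (ii) for every s, s ∈ R iff Σ_{s'∈Succ(s)} θ_{s,s'} = 1; (iii) for every s, s ∉ R iff Σ_{s'∈Succ(s)} θ_{s,s'} = 0; and (iv) for every s ∈ R and s' ∈ Succ(s), θ_{s,s'} lies in the interval obtained by evaluating P(s,s') under v. -/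
open Classical

/-- Parametric interval Markov chain: interval endpoints are (rational) functions of the
parameter valuations `v : Y → ℝ`. -/
structure PIMC (S : Type) (A : Type) (Y : Type) where
  s0 : S
  Plo : S → S → (Y → ℝ) → ℝ
  Phi : S → S → (Y → ℝ) → ℝ
  V : S → Set A

/-- `x` lies in the interval obtained by evaluating the parametric interval `P(s,s')`
under valuation `v` (the evaluated interval is empty unless
`0 ≤ lo ≤ hi ≤ 1`). -/
def memPI {S A Y : Type} (P : PIMC S A Y) (v : Y → ℝ) (s s' : S) (x : ℝ) : Prop :=
  0 ≤ P.Plo s s' v ∧ P.Plo s s' v ≤ x ∧ x ≤ P.Phi s s' v ∧ P.Phi s s' v ≤ 1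

/-- `s'` is a potential successor of `s`: the parametric interval `P(s,s')` is not
identically `[0,0]`. -/
def PSucc {S A Y : Type} (P : PIMC S A Y) (s s' : S) : Prop :=
  ∃ v : Y → ℝ, P.Plo s s' v ≠ 0 ∨ P.Phi s s' v ≠ 0

/-- Once-and-for-all satisfaction of a pIMC: `M` satisfies some IMC instance of `P`. -/
def SatOP {S A Y : Type} (M : MC S A) (P : PIMC S A Y) : Prop :=
  M.s0 = P.s0 ∧ M.V = P.V ∧
    ∃ v : Y → ℝ, (∀ y, 0 ≤ v y ∧ v y ≤ 1) ∧
      ∀ s, MC.Reaches M.p M.s0 s → ∀ s', memPI P v s s' (M.p s s')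

/-- At-every-step satisfaction of a pIMC: `M ⊨ᵃ` some IMC instance of `P`. -/
def SatAP {T S A Y : Type} (M : MC T A) (P : PIMC S A Y) : Prop :=
  ∃ v : Y → ℝ, (∀ y, 0 ≤ v y ∧ v y ≤ 1) ∧
    ∃ R : T → S → Prop, R M.s0 P.s0 ∧
      ∀ t s, R t s → M.V t = P.V s ∧
        ∃ δ : T → S → ℝ,
          (∀ t' s', 0 ≤ δ t' s') ∧
          (∀ t', 0 < M.p t t' → ∑ᶠ s', δ t' s' = 1) ∧
          (∀ s', memPI P v s s' (∑ᶠ t', M.p t t' * δ t' s')) ∧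
          (∀ t' s', 0 < δ t' s' → R t' s')


private lemma exists_pred_aux {S : Type} (p : S → S → ℝ) (a s : S)
    (h : Relation.ReflTransGen (fun x y => 0 < p x y) a s) (hne : a ≠ s) :
    ∃ t, Relation.ReflTransGen (fun x y => 0 < p x y) a t ∧ t ≠ s ∧ 0 < p t s := by
  revert hne
  induction h using Relation.ReflTransGen.head_induction_on with
  | refl => exact fun hne => absurd rfl hne
  | head hac hcb ih =>
    intro hne
    rename_i a' c
    by_cases hcs : c = s
    · exact ⟨a', Relation.ReflTransGen.refl, hne, hcs ▸ hac⟩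
    · obtain ⟨t, ht, hts, hpos⟩ := ih hcs
      exact ⟨t, Relation.ReflTransGen.head hac ht, hts, hpos⟩

private lemma notPSucc_zero {S A Y : Type} {P : PIMC S A Y} {s s' : S}
    (h : ¬ PSucc P s s') (v : Y → ℝ) : P.Plo s s' v = 0 ∧ P.Phi s s' v = 0 := by
  unfold PSucc at h
  push_neg at h
  exact h v

/-- existential consistency of a pIMC is equivalent to satisfiability of
the constraint encoding `Mec(P)` (valuation `v`, active states `R`, transition
values `θ`). -/
theorem stmt11 {S A Y : Type} [Finite S] (P : PIMC S A Y) :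
    (∃ M : MC S A, SatOP M P) ↔
      ∃ v : Y → ℝ, (∀ y, 0 ≤ v y ∧ v y ≤ 1) ∧
        ∃ R : Set S, P.s0 ∈ R ∧
          ∃ θ : S → S → ℝ, (∀ s s', 0 ≤ θ s s' ∧ θ s s' ≤ 1) ∧
            (∀ s, s ≠ P.s0 →
              (s ∉ R ↔ (∑ᶠ s', if PSucc P s' s ∧ s' ≠ s then θ s' s else 0) = 0)) ∧
            (∀ s, s ∈ R ↔ (∑ᶠ s', if PSucc P s s' then θ s s' else 0) = 1) ∧
            (∀ s, s ∉ R ↔ (∑ᶠ s', if PSucc P s s' then θ s s' else 0) = 0) ∧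
            (∀ s, s ∈ R → ∀ s', PSucc P s s' → memPI P v s s' (θ s s')) := by
  classical
  have : Fintype S := Fintype.ofFinite S
  constructor
  · rintro ⟨M, hs0, hV, v, hv, hmem⟩
    set Rch := fun s => MC.Reaches M.p M.s0 s with hRch
    have hzero : ∀ s, Rch s → ∀ s', ¬ PSucc P s s' → M.p s s' = 0 := by
      intro s hs s' hns
      obtain ⟨h1, h2, h3, h4⟩ := hmem s hs s'
      obtain ⟨e1, e2⟩ := notPSucc_zero hns v
      linarith
    refine ⟨v, hv, {s | Rch s}, ?_, fun s s' => if Rch s then M.p s s' else 0,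
      ?_, ?_, ?_, ?_, ?_⟩
    · exact hs0 ▸ Relation.ReflTransGen.refl
    · intro s s'
      by_cases hs : Rch s
      · simp only [if_pos hs]
        obtain ⟨h1, h2, h3, h4⟩ := hmem s hs s'
        exact ⟨M.nonneg s s', by linarith⟩
      · simp only [if_neg hs]; norm_num
    · -- condition (i)
      intro s hsne
      constructor
      · intro hsR
        have : ∀ s', (if PSucc P s' s ∧ s' ≠ s then if Rch s' then M.p s' s else 0 else 0) = 0 := by
          intro s'
          by_cases h1 : PSucc P s' s ∧ s' ≠ s
          · simp only [if_pos h1]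
            by_cases h2 : Rch s'
            · simp only [if_pos h2]
              by_contra hne
              have hpos : 0 < M.p s' s := lt_of_le_of_ne (M.nonneg s' s) (Ne.symm hne)
              exact hsR (Relation.ReflTransGen.tail h2 hpos)
            · simp [h2]
          · simp [h1]
        simp only [this, finsum_zero]
      · intro hsum
        by_contra hsR
        replace hsR : Rch s := hsR
        have hsne' : M.s0 ≠ s := hs0 ▸ fun h => hsne h.symm
        obtain ⟨t, ht, hts, hpos⟩ := exists_pred_aux M.p M.s0 s hsR hsne'
        have hPS : PSucc P t s := by
          obtain ⟨h1, h2, h3, h4⟩ := hmem t ht s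
          exact ⟨v, Or.inr (by linarith)⟩
        rw [finsum_eq_sum_of_fintype] at hsum
        have h0 : (if PSucc P t s ∧ t ≠ s then (if Rch t then M.p t s else 0) else 0) = 0 :=
          (Finset.sum_eq_zero_iff_of_nonneg (fun i _ => by
            by_cases h1 : PSucc P i s ∧ i ≠ s
            · simp only [if_pos h1]
              by_cases h2 : Rch i
              · simp only [if_pos h2]; exact M.nonneg i s
              · simp [h2]
            · simp [h1])).mp hsum t (Finset.mem_univ t)
        rw [if_pos ⟨hPS, hts⟩, if_pos (show Rch t from ht)] at h0
        exact absurd h0 (ne_of_gt hpos)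
    · -- condition (ii)
      intro s
      constructor
      · intro hs
        replace hs : Rch s := hs
        have : ∀ s', (if PSucc P s s' then if Rch s then M.p s s' else 0 else 0) = M.p s s' := by
          intro s'
          by_cases h1 : PSucc P s s'
          · simp [h1, hs]
          · simp [h1, (hzero s hs s' h1).symm]
        rw [finsum_congr this, M.sum_one]
      · intro hsum
        by_contra hsR
        replace hsR : ¬ Rch s := hsR
        have : ∀ s', (if PSucc P s s' then if Rch s then M.p s s' else 0 else 0) = 0 := by
          intro s'; by_cases h1 : PSucc P s s' <;> simp [h1, hsR]
        rw [finsum_congr this, finsum_zero] at hsum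
        norm_num at hsum
    · -- condition (iii)
      intro s
      constructor
      · intro hsR
        replace hsR : ¬ Rch s := hsR
        have : ∀ s', (if PSucc P s s' then if Rch s then M.p s s' else 0 else 0) = 0 := by
          intro s'; by_cases h1 : PSucc P s s' <;> simp [h1, hsR]
        rw [finsum_congr this, finsum_zero]
      · intro hsum hs
        replace hs : Rch s := hs
        have : ∀ s', (if PSucc P s s' then if Rch s then M.p s s' else 0 else 0) = M.p s s' := by
          intro s'
          by_cases h1 : PSucc P s s'
          · simp [h1, hs]
          · simp [h1, (hzero s hs s' h1).symm]
        rw [finsum_congr this, M.sum_one] at hsum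
        norm_num at hsum
    · -- condition (iv)
      intro s hs s' _
      replace hs : Rch s := hs
      show memPI P v s s' (if Rch s then M.p s s' else 0)
      rw [if_pos hs]
      exact hmem s hs s'
  · rintro ⟨v, hv, R, hR0, θ, hθb, hc1, hc2, hc3, hc4⟩
    set p : S → S → ℝ := fun s s' =>
      if s ∈ R then (if PSucc P s s' then θ s s' else 0) else (if s' = s then 1 else 0) with hp
    have hnn : ∀ s s', 0 ≤ p s s' := by
      intro s s'
      simp only [hp]
      by_cases hs : s ∈ R
      · simp only [if_pos hs]
        by_cases h1 : PSucc P s s' <;> simp [h1, (hθb s s').1]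
      · simp only [if_neg hs]
        by_cases h1 : s' = s <;> simp [h1]
    have hso : ∀ s, ∑ᶠ s', p s s' = 1 := by
      intro s
      by_cases hs : s ∈ R
      · have : ∀ s', p s s' = (if PSucc P s s' then θ s s' else 0) := by
          intro s'; simp [hp, hs]
        rw [finsum_congr this]
        exact (hc2 s).mp hs
      · have : ∀ s', p s s' = (if s' = s then 1 else 0) := by
          intro s'; simp [hp, hs]
        rw [finsum_congr this]
        rw [finsum_eq_single _ s (fun x hx => if_neg hx)]
        simp
    refine ⟨⟨P.s0, p, hnn, hso, P.V⟩, rfl, rfl, v, hv, ?_⟩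
    intro s hreach s'
    have hsR : s ∈ R := by
      have : ∀ t, MC.Reaches p P.s0 t → t ∈ R := by
        intro t ht
        induction ht with
        | refl => exact hR0
        | @tail b c hab hbc ih =>
          replace hbc : 0 < (if b ∈ R then (if PSucc P b c then θ b c else 0)
              else (if c = b then 1 else 0)) := hbc
          rw [if_pos ih] at hbc
          by_cases hPS : PSucc P b c
          · rw [if_pos hPS] at hbc
            by_contra hcR
            by_cases hc0 : c = P.s0
            · exact hcR (hc0 ▸ hR0)
            · have hbc' : b ≠ c := fun h => hcR (h ▸ ih)
              have hsum := (hc1 c hc0).mp hcR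
              rw [finsum_eq_sum_of_fintype] at hsum
              have := (Finset.sum_eq_zero_iff_of_nonneg (fun i _ => by
                by_cases h1 : PSucc P i c ∧ i ≠ c
                · simp only [if_pos h1]; exact (hθb i c).1
                · simp [h1])).mp hsum b (Finset.mem_univ b)
              rw [if_pos ⟨hPS, hbc'⟩] at this
              exact absurd this (ne_of_gt hbc)
          · rw [if_neg hPS] at hbc; norm_num at hbc
      exact this s hreach
    show memPI P v s s' (if s ∈ R then (if PSucc P s s' then θ s s' else 0)
        else (if s' = s then 1 else 0))
    rw [if_pos hsR]
    by_cases hPS : PSucc P s s'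
    · rw [if_pos hPS]
      exact hc4 s hsR s' hPS
    · rw [if_neg hPS]
      obtain ⟨e1, e2⟩ := notPSucc_zero hPS v
      exact ⟨le_of_eq e1.symm, le_of_eq e1, le_of_eq e2.symm, by linarith⟩
end
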